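/- Under Assumption 3, for every real power series f with Σ_h |f_h| < ∞, the normalized trace converges: (1/m_n) Σ_{i∈G_n} K(f)(i,i) → ∫_{[−1,1]} f(λ) dμ(λ) as n → ∞, where f(λ) = Σ_h f_h λ^h. -/

import Mathlib

/-! Every row of `W` has absolute sum at most `1`, so every entry of `W ^ h` has absolute value
at most `1`. Both sides are therefore series in `h` dominated by `Σ_h |f_h|`: the normalized
trace of `K(f)` is `Σ_h f_h · (normalized trace of W ^ h)` and the integral is
`Σ_h f_h ∫ λ ^ h dμ`. Assumption 3 gives convergence term by term, and Tannery's theorem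
(dominated convergence for series) concludes. -/

open scoped BigOperators Classical
open MeasureTheory Filter ProbabilityTheory

noncomputable section

variable {G : Type*}

/-- Entrywise powers of the kernel `W`. -/
def Wpow (W : G → G → ℝ) : ℕ → G → G → ℝ
  | 0 => fun i j => if i = j then (1 : ℝ) else 0
  | (h + 1) => fun i j => ∑' k, W i k * Wpow W h k j

/-- The infinite matrix `K(f)` associated to a power series `f`. -/
def Kmat (W : G → G → ℝ) (f : ℕ → ℝ) (i j : G) : ℝ :=
  ∑' h, f h * Wpow W h i j

/-- The finite matrix `K_n(f)`, the restriction of `K(f)` to a finite subset. -/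
def Kn (W : G → G → ℝ) (f : ℕ → ℝ) (Gn : Finset G) : Matrix Gn Gn ℝ :=
  Matrix.of fun i j => Kmat W f (i : G) (j : G)

/-- The regularity factor `α(f) = Σ_h |f_h| (h+1)`. -/
def regFactor (f : ℕ → ℝ) : ℝ := ∑' h, |f h| * (h + 1 : ℝ)

/-- `‖f‖_{1,pol} = Σ_h |f_h|`. -/
def polNorm (f : ℕ → ℝ) : ℝ := ∑' h, |f h|

/-- Cauchy product of power series. -/
def cauchy (f g : ℕ → ℝ) (h : ℕ) : ℝ :=
  ∑ k ∈ Finset.range (h + 1), f k * g (h - k)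

/-- The unit power series (`1`). -/
def cauchyOne : ℕ → ℝ := fun h => if h = 0 then 1 else 0

/-- `k`-th Cauchy power of a power series. -/
def cauchyPow (g : ℕ → ℝ) : ℕ → ℕ → ℝ
  | 0 => cauchyOne
  | (k + 1) => cauchy g (cauchyPow g k)

/-- `δ_n`: the cardinality of the boundary of `G_n`. -/
def boundary (W : G → G → ℝ) (Gn : Finset G) : ℕ :=
  ({i | i ∈ Gn ∧ ∃ j, j ∉ Gn ∧ W i j ≠ 0} : Set G).ncard

/-- The block norm `b_n(B) = (1/δ_n) Σ_{i,j} |B(i,j)|`. -/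
def blockNorm (W : G → G → ℝ) (Gn : Finset G) (B : Matrix Gn Gn ℝ) : ℝ :=
  (1 / (boundary W Gn : ℝ)) * ∑ i, ∑ j, |B i j|

/-- Evaluation of a power series at a point. -/
def fEval (f : ℕ → ℝ) (x : ℝ) : ℝ := ∑' h, f h * x ^ h

/-- The class `F_ρ`: positive on `[-1,1]`, with `log f` admitting a power series
expansion on `[-1,1]` whose regularity factor is at most `ρ`. -/
def memF (ρ : ℝ) (f : ℕ → ℝ) : Prop :=
  Summable (fun h => |f h|) ∧
  (∀ x ∈ Set.Icc (-1 : ℝ) 1, 0 < fEval f x) ∧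
  ∃ g : ℕ → ℝ, Summable (fun h => |g h| * (h + 1 : ℝ)) ∧ regFactor g ≤ ρ ∧
    ∀ x ∈ Set.Icc (-1 : ℝ) 1, Real.log (fEval f x) = fEval g x

/-- The standing hypotheses on the kernel `W`: symmetry, degree bounded by `D`,
and entries bounded by `1/D`. -/
def KernelHyp (W : G → G → ℝ) (D : ℕ) : Prop :=
  (∀ i j, W i j = W j i) ∧
  (∀ i, ({j | W i j ≠ 0} : Set G).Finite) ∧
  (∀ i, ({j | W i j ≠ 0} : Set G).ncard ≤ D) ∧
  (∀ i j, |W i j| ≤ 1 / (D : ℝ))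

theorem abs_mul_le_abs_left_of_abs_le_one {x y : ℝ} (hy : |y| ≤ 1) : |x * y| ≤ |x| := by
  rw [abs_mul]
  exact mul_le_of_le_one_right (abs_nonneg x) hy

theorem summable_mul_of_abs_le_one {f a : ℕ → ℝ} (hf : Summable fun h => |f h|)
    (ha : ∀ h, |a h| ≤ 1) : Summable fun h => f h * a h :=
  hf.of_norm_bounded fun h => abs_mul_le_abs_left_of_abs_le_one (ha h)

theorem abs_one_div_card_mul_sum_le_one {ι : Type*} (s : Finset ι) {a : ι → ℝ}
    (ha : ∀ i ∈ s, |a i| ≤ 1) : |1 / (s.card : ℝ) * ∑ i ∈ s, a i| ≤ 1 := by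
  have hsum : |∑ i ∈ s, a i| ≤ s.card := by
    simpa using (Finset.abs_sum_le_sum_abs _ _).trans (Finset.sum_le_card_nsmul s _ 1 ha)
  rw [abs_mul, abs_of_nonneg (by positivity), one_div_mul_eq_div]
  exact div_le_one_of_le₀ hsum (Nat.cast_nonneg _)

theorem integral_fEval_eq_tsum {μ : Measure ℝ} [IsFiniteMeasure μ]
    (hsupp : ∀ᵐ x ∂μ, x ∈ Set.Icc (-1 : ℝ) 1) {f : ℕ → ℝ} (hf : Summable fun h => |f h|) :
    ∫ x, fEval f x ∂μ = ∑' h, f h * ∫ x, x ^ h ∂μ := by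
  have hpow : ∀ᵐ x ∂μ, ∀ h : ℕ, |x ^ h| ≤ 1 := hsupp.mono fun x hx h => by
    rw [abs_pow]
    exact pow_le_one₀ (abs_nonneg x) (abs_le.mpr hx)
  simp only [← integral_const_mul]
  refine (hasSum_integral_of_dominated_convergence (F := fun h x => f h * x ^ h)
    (fun h _ => |f h|) (fun h => (continuous_const.mul (continuous_pow h)).aestronglyMeasurable)
    (fun h => hpow.mono fun x hx => abs_mul_le_abs_left_of_abs_le_one (hx h))
    (.of_forall fun _ => hf) (integrable_const _)
    (hpow.mono fun x hx => (summable_mul_of_abs_le_one hf hx).hasSum)).tsum_eq.symm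

section Kernel

variable {W : G → G → ℝ} {D : ℕ}

theorem KernelHyp.sum_abs_le_one (hker : KernelHyp W D) (i : G) :
    ∑ k ∈ (hker.2.1 i).toFinset, |W i k| ≤ 1 := by
  obtain ⟨-, hfin, hcard, hbd⟩ := hker
  have hcard' : ((hfin i).toFinset.card : ℝ) ≤ D := by
    rw [← Set.ncard_eq_toFinset_card _ (hfin i)]
    exact_mod_cast hcard i
  calc ∑ k ∈ (hfin i).toFinset, |W i k|
      ≤ (hfin i).toFinset.card * (1 / (D : ℝ)) := by
        simpa using Finset.sum_le_card_nsmul _ _ _ fun k _ => hbd i k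
    _ ≤ D * (1 / (D : ℝ)) := by gcongr
    _ ≤ 1 := by
      rw [mul_one_div]
      exact div_self_le_one _

theorem Wpow_succ_eq_sum (hfin : ∀ i, ({j | W i j ≠ 0} : Set G).Finite) (h : ℕ) (i j : G) :
    Wpow W (h + 1) i j = ∑ k ∈ (hfin i).toFinset, W i k * Wpow W h k j :=
  tsum_eq_sum fun k hk => by simp_all

theorem KernelHyp.abs_Wpow_le_one (hker : KernelHyp W D) (h : ℕ) (i j : G) :
    |Wpow W h i j| ≤ 1 := by
  induction h generalizing i with
  | zero => by_cases hij : i = j <;> simp [Wpow, hij]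
  | succ h ih =>
    rw [Wpow_succ_eq_sum hker.2.1]
    calc |∑ k ∈ (hker.2.1 i).toFinset, W i k * Wpow W h k j|
        ≤ ∑ k ∈ (hker.2.1 i).toFinset, |W i k| * |Wpow W h k j| := by
          simpa only [abs_mul] using Finset.abs_sum_le_sum_abs (fun k => W i k * Wpow W h k j) _
      _ ≤ ∑ k ∈ (hker.2.1 i).toFinset, |W i k| :=
          Finset.sum_le_sum fun k _ => mul_le_of_le_one_right (abs_nonneg _) (ih k)
      _ ≤ 1 := hker.sum_abs_le_one i

theorem one_div_card_mul_sum_Kmat_eq_tsum (hker : KernelHyp W D) {f : ℕ → ℝ}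
    (hf : Summable fun h => |f h|) (s : Finset G) :
    1 / (s.card : ℝ) * ∑ i ∈ s, Kmat W f i i
      = ∑' h, f h * (1 / (s.card : ℝ) * ∑ i ∈ s, Wpow W h i i) := by
  have hsum (i : G) : Summable fun h => f h * Wpow W h i i :=
    summable_mul_of_abs_le_one hf fun h => hker.abs_Wpow_le_one h i i
  simp only [Kmat, ← Summable.tsum_finsetSum fun i _ => hsum i, ← tsum_mul_left,
    Finset.mul_sum]
  exact tsum_congr fun h => Finset.sum_congr rfl fun i _ => by ring

end Kernel

theorem stmt11_general {G : Type*} (W : G → G → ℝ) (D : ℕ)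
    (hker : KernelHyp W D)
    (GN : ℕ → Finset G)
    (μ : Measure ℝ) [IsProbabilityMeasure μ]
    (hsupp : μ (Set.Icc (-1 : ℝ) 1)ᶜ = 0)
    (hA3 : ∀ k : ℕ, Tendsto
      (fun n => (1 / ((GN n).card : ℝ)) * ∑ i ∈ GN n, Wpow W k i i)
      atTop (nhds (∫ x, x ^ k ∂μ)))
    (f : ℕ → ℝ) (hf : Summable (fun h => |f h|)) :
    Tendsto (fun n => (1 / ((GN n).card : ℝ)) * ∑ i ∈ GN n, Kmat W f i i)
      atTop (nhds (∫ x, fEval f x ∂μ)) := by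
  simp only [one_div_card_mul_sum_Kmat_eq_tsum hker hf, integral_fEval_eq_tsum hsupp hf]
  refine tendsto_tsum_of_dominated_convergence hf (fun h => (hA3 h).const_mul (f h))
    (.of_forall fun n h => ?_)
  exact abs_mul_le_abs_left_of_abs_le_one <|
    abs_one_div_card_mul_sum_le_one _ fun i _ => hker.abs_Wpow_le_one h i i

/-- Under Assumption 3 (existence of the spectral measure `μ`), for
every power series `f` with `Σ_h |f_h| < ∞`,
`(1/m_n) Σ_{i∈G_n} K(f)(i,i) → ∫ f(λ) dμ(λ)`. -/
theorem stmt11 {G : Type*} [Countable G] (W : G → G → ℝ) (D : ℕ) (hD : 0 < D)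
    (hker : KernelHyp W D)
    (GN : ℕ → Finset G)
    (μ : Measure ℝ) [IsProbabilityMeasure μ]
    (hsupp : μ (Set.Icc (-1 : ℝ) 1)ᶜ = 0)
    (hA3 : ∀ k : ℕ, Tendsto
      (fun n => (1 / ((GN n).card : ℝ)) * ∑ i ∈ GN n, Wpow W k i i)
      atTop (nhds (∫ x, x ^ k ∂μ)))
    (f : ℕ → ℝ) (hf : Summable (fun h => |f h|)) :
    Tendsto (fun n => (1 / ((GN n).card : ℝ)) * ∑ i ∈ GN n, Kmat W f i i)
      atTop (nhds (∫ x, fEval f x ∂μ)) :=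
  stmt11_general W D hker GN μ hsupp hA3 f hf

end
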